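/- arXiv:2602.16286 — 2 statements merged into one kernel-verified Lean document; each statement's English description precedes it below -/
import Mathlib

section
/- There is no unitary operator U on H ⊗ H ⊗ E (for a fixed blank state b and ancilla state e) such that U(ψ ⊗ b ⊗ e) = ψ ⊗ ψ ⊗ e_ψ with ‖e_ψ‖ = 1 for all unit vectors ψ, when dim H ≥ 2. (No-cloning with ancilla, via inner-product preservation.) -/
/-- The concrete tensor product of three Euclidean vectors:
`(ψ ⊗ φ ⊗ η) (i, j, k) = ψ i * φ j * η k`. -/
def tp3 {n m : ℕ} (ψ φ : EuclideanSpace ℂ (Fin n)) (η : EuclideanSpace ℂ (Fin m)) :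
    EuclideanSpace ℂ (Fin n × Fin n × Fin m) :=
  WithLp.toLp 2 (fun p : Fin n × Fin n × Fin m => ψ p.1 * φ p.2.1 * η p.2.2)

lemma inner_tp3 {n m : ℕ} (ψ φ ψ' φ' : EuclideanSpace ℂ (Fin n))
    (η η' : EuclideanSpace ℂ (Fin m)) :
    (inner ℂ (tp3 ψ φ η) (tp3 ψ' φ' η') : ℂ)
      = (inner ℂ ψ ψ' : ℂ) * (inner ℂ φ φ' : ℂ) * (inner ℂ η η' : ℂ) := by
  simp only [PiLp.inner_apply, RCLike.inner_apply]
  show (∑ p : Fin n × Fin n × Fin m, _) = _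
  simp only [Fintype.sum_prod_type]
  simp only [tp3]
  simp only [map_mul]
  simp only [Finset.sum_mul, Finset.mul_sum]
  conv_rhs => rw [Finset.sum_comm]
  conv_lhs => rw [Finset.sum_comm]
  refine Finset.sum_congr rfl fun b _ => ?_
  rw [Finset.sum_comm]
  exact Finset.sum_congr rfl fun c _ => Finset.sum_congr rfl fun a _ => by ring

/-- **No-cloning with ancilla.** With `dim H ≥ 2`, a fixed blank unit vector `b`
and ancilla unit vector `e`, there is no inner-product-preserving linear map `U`
on `H ⊗ H ⊗ E` together with unit vectors `e_ψ` such that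
`U (ψ ⊗ b ⊗ e) = ψ ⊗ ψ ⊗ e_ψ` for all unit vectors `ψ`. -/
theorem no_unitary_cloner_with_ancilla
    {n m : ℕ} (hn : 2 ≤ n)
    (b : EuclideanSpace ℂ (Fin n)) (hb : ‖b‖ = 1)
    (e : EuclideanSpace ℂ (Fin m)) (he : ‖e‖ = 1) :
    ¬ ∃ (U : EuclideanSpace ℂ (Fin n × Fin n × Fin m) →ₗ[ℂ]
          EuclideanSpace ℂ (Fin n × Fin n × Fin m))
        (eψ : EuclideanSpace ℂ (Fin n) → EuclideanSpace ℂ (Fin m)),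
      (∀ x y : EuclideanSpace ℂ (Fin n × Fin n × Fin m),
          @inner ℂ _ _ (U x) (U y) = @inner ℂ _ _ x y) ∧
      (∀ ψ : EuclideanSpace ℂ (Fin n), ‖ψ‖ = 1 →
          ‖eψ ψ‖ = 1 ∧ U (tp3 ψ b e) = tp3 ψ ψ (eψ ψ)) := by
  rintro ⟨U, eψ, hU, hclone⟩
  set i0 : Fin n := ⟨0, by omega⟩
  set i1 : Fin n := ⟨1, by omega⟩
  have hne : i0 ≠ i1 := by simp [i0, i1, Fin.ext_iff]
  set ψ : EuclideanSpace ℂ (Fin n) := EuclideanSpace.single i0 1 with hψdef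
  set φ : EuclideanSpace ℂ (Fin n) :=
    ((Real.sqrt 2)⁻¹ : ℂ) • (EuclideanSpace.single i0 1 + EuclideanSpace.single i1 1) with hφdef
  have hψnorm : ‖ψ‖ = 1 := by simp [hψdef]
  have hs01 : (inner ℂ (EuclideanSpace.single i0 (1:ℂ)) (EuclideanSpace.single i1 (1:ℂ)) : ℂ) = 0 := by
    simp [EuclideanSpace.inner_single_left, EuclideanSpace.single_apply, Ne.symm hne]
  have hadd : ‖EuclideanSpace.single i0 (1:ℂ) + EuclideanSpace.single i1 (1:ℂ)‖ = Real.sqrt 2 := by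
    have := norm_add_sq (𝕜 := ℂ) (EuclideanSpace.single i0 (1:ℂ)) (EuclideanSpace.single i1 (1:ℂ))
    rw [hs01] at this
    simp at this
    rw [show (2:ℝ) = ‖EuclideanSpace.single i0 (1:ℂ) + EuclideanSpace.single i1 (1:ℂ)‖^2 by
      rw [this]; norm_num]
    rw [Real.sqrt_sq (norm_nonneg _)]
  have hφnorm : ‖φ‖ = 1 := by
    rw [hφdef, norm_smul, hadd]
    rw [norm_inv, Complex.norm_real, Real.norm_eq_abs, abs_of_nonneg (Real.sqrt_nonneg 2),
      inv_mul_cancel₀ (by positivity)]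
  have hipψφ : (inner ℂ ψ φ : ℂ) = ((Real.sqrt 2)⁻¹ : ℝ) := by
    rw [hψdef, hφdef, inner_smul_right]
    simp [EuclideanSpace.inner_single_left, EuclideanSpace.single_apply, hne]
  obtain ⟨hnψ, hcψ⟩ := hclone ψ hψnorm
  obtain ⟨hnφ, hcφ⟩ := hclone φ hφnorm
  have key := hU (tp3 ψ b e) (tp3 φ b e)
  rw [hcψ, hcφ, inner_tp3, inner_tp3] at key
  have hbb : (inner ℂ b b : ℂ) = 1 := by
    rw [inner_self_eq_norm_sq_to_K, hb]; norm_num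
  have hee : (inner ℂ e e : ℂ) = 1 := by
    rw [inner_self_eq_norm_sq_to_K, he]; norm_num
  rw [hbb, hee, hipψφ, mul_one, mul_one] at key
  -- key : (√2)⁻¹ * (√2)⁻¹ * ⟪eψ ψ, eψ φ⟫ = (√2)⁻¹
  set c : ℂ := inner ℂ (eψ ψ) (eψ φ) with hc
  have h2 : ((Real.sqrt 2 : ℝ) : ℂ) ≠ 0 := by
    exact_mod_cast (show Real.sqrt 2 ≠ 0 from by positivity)
  have hcval : c = ((Real.sqrt 2 : ℝ) : ℂ) := by
    rw [Complex.ofReal_inv] at key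
    field_simp at key
    exact key
  have hle : ‖c‖ ≤ 1 := by
    calc ‖c‖ ≤ ‖eψ ψ‖ * ‖eψ φ‖ := norm_inner_le_norm _ _
    _ = 1 := by rw [hnψ, hnφ]; ring
  rw [hcval] at hle
  have : (1:ℝ) < Real.sqrt 2 := by
    nlinarith [Real.sq_sqrt (show (0:ℝ) ≤ 2 by norm_num), Real.sqrt_nonneg 2]
  simp only [Complex.norm_real, Real.norm_eq_abs,
    abs_of_nonneg (Real.sqrt_nonneg 2)] at hle
  linarith
end

section
/- There is no linear map D : H ⊗ H → H ⊗ E (for fixed blank state b ∈ H and states e, e' ∈ E) satisfying D(ψ ⊗ ψ) = ψ ⊗ e for all unit vectors ψ, when dim H ≥ 2. (No-deleting via linearity: deletion of one copy of an unknown state cannot be a linear operation.) -/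
open scoped TensorProduct

/-- **No-deleting via linearity.** For complex inner product spaces `H` (of
dimension ≥ 2) and `E` with a fixed unit vector `e : E`, there is no linear map
`D : H ⊗ H → H ⊗ E` satisfying `D (ψ ⊗ₜ ψ) = ψ ⊗ₜ e` for all unit vectors `ψ`. -/
theorem no_universal_linear_deleter
    (H E : Type*) [NormedAddCommGroup H] [InnerProductSpace ℂ H]
    [NormedAddCommGroup E] [InnerProductSpace ℂ E]
    (hdim : 2 ≤ Module.rank ℂ H) (e : E) (he : ‖e‖ = 1) :
    ¬ ∃ D : H ⊗[ℂ] H →ₗ[ℂ] H ⊗[ℂ] E,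
        ∀ ψ : H, ‖ψ‖ = 1 → D (ψ ⊗ₜ[ℂ] ψ) = ψ ⊗ₜ[ℂ] e := by
  rintro ⟨D, hD⟩
  -- obtain an orthonormal pair
  haveI : WellFoundedLT (Fin 2) := inferInstance
  obtain ⟨f, hf⟩ := exists_linearIndependent_of_le_rank (n := 2) (by exact_mod_cast hdim)
  set g : Fin 2 → H := InnerProductSpace.gramSchmidtNormed ℂ f with hg
  have hon : Orthonormal ℂ g := InnerProductSpace.gramSchmidtNormed_orthonormal hf
  have hli : LinearIndependent ℂ g := hon.linearIndependent
  set ψ₀ : H := g 0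
  set ψ₁ : H := g 1
  have hn0 : ‖ψ₀‖ = 1 := hon.1 0
  have hn1 : ‖ψ₁‖ = 1 := hon.1 1
  have hip : (inner ℂ ψ₀ ψ₁ : ℂ) = 0 := hon.2 (by decide : (0 : Fin 2) ≠ 1)
  -- the scalar
  set a : ℝ := (Real.sqrt 2)⁻¹ with ha
  have ha0 : 0 < a := by positivity
  set c : ℂ := (a : ℂ) with hc
  have ha2 : a ^ 2 = 1 / 2 := by
    rw [ha, inv_pow, Real.sq_sqrt (by norm_num : (0:ℝ) ≤ 2)]
    norm_num
  have hc2 : c ^ 2 = 1 / 2 := by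
    rw [hc, ← Complex.ofReal_pow, ha2]
    norm_num
  have hcne : c ≠ 0 := by
    simp [hc, ha0.ne']
  -- unit vectors u, v
  set u : H := c • ψ₀ + c • ψ₁ with hu_def
  set v : H := c • ψ₀ + (c * Complex.I) • ψ₁ with hv_def
  have hnc : ‖c‖ = a := by
    simp [hc, abs_of_pos ha0]
  have hnorm_sq : ∀ (s t : ℂ), ‖s‖ = a → ‖t‖ = a →
      ‖s • ψ₀ + t • ψ₁‖ = 1 := by
    intro s t hs ht
    have horth : (inner ℂ (s • ψ₀) (t • ψ₁) : ℂ) = 0 := by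
      rw [inner_smul_left, inner_smul_right, hip]; ring
    have hsq := norm_add_sq_eq_norm_sq_add_norm_sq_of_inner_eq_zero _ _ horth
    rw [norm_smul, norm_smul, hn0, hn1, hs, ht] at hsq
    nlinarith [norm_nonneg (s • ψ₀ + t • ψ₁), ha2]
  have hu_norm : ‖u‖ = 1 := hnorm_sq c c hnc hnc
  have hv_norm : ‖v‖ = 1 := by
    refine hnorm_sq c (c * Complex.I) hnc ?_
    rw [norm_mul, Complex.norm_I, mul_one, hnc]
  -- the contraction map F : H ⊗ E →ₗ H
  set F : H ⊗[ℂ] E →ₗ[ℂ] H :=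
    (TensorProduct.rid ℂ H).toLinearMap ∘ₗ
      (LinearMap.lTensor H (innerSL ℂ e).toLinearMap) with hF_def
  have hee : (inner ℂ e e : ℂ) = 1 := by
    rw [inner_self_eq_norm_sq_to_K, he]; norm_num
  have hF : ∀ ψ : H, F (ψ ⊗ₜ[ℂ] e) = ψ := by
    intro ψ
    simp [hF_def, hee, he]
  -- the combined map G
  set G : H ⊗[ℂ] H →ₗ[ℂ] H := F ∘ₗ D with hG_def
  have hG : ∀ ψ : H, ‖ψ‖ = 1 → G (ψ ⊗ₜ[ℂ] ψ) = ψ := by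
    intro ψ hψ
    simp [hG_def, hD ψ hψ, hF ψ]
  set x : H := G (ψ₀ ⊗ₜ[ℂ] ψ₁) with hx
  set y : H := G (ψ₁ ⊗ₜ[ℂ] ψ₀) with hy
  have h0 : G (ψ₀ ⊗ₜ[ℂ] ψ₀) = ψ₀ := hG ψ₀ hn0
  have h1 : G (ψ₁ ⊗ₜ[ℂ] ψ₁) = ψ₁ := hG ψ₁ hn1
  have hupand : u ⊗ₜ[ℂ] u = (c^2) • (ψ₀ ⊗ₜ[ℂ] ψ₀) + (c^2) • (ψ₀ ⊗ₜ[ℂ] ψ₁)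
      + (c^2) • (ψ₁ ⊗ₜ[ℂ] ψ₀) + (c^2) • (ψ₁ ⊗ₜ[ℂ] ψ₁) := by
    simp only [hu_def, TensorProduct.add_tmul, TensorProduct.tmul_add,
      ← TensorProduct.smul_tmul', TensorProduct.tmul_smul, smul_smul]
    module
  have hvpand : v ⊗ₜ[ℂ] v = (c^2) • (ψ₀ ⊗ₜ[ℂ] ψ₀) + (c^2 * Complex.I) • (ψ₀ ⊗ₜ[ℂ] ψ₁)
      + (c^2 * Complex.I) • (ψ₁ ⊗ₜ[ℂ] ψ₀)
      + (c^2 * Complex.I * Complex.I) • (ψ₁ ⊗ₜ[ℂ] ψ₁) := by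
    simp only [hv_def, TensorProduct.add_tmul, TensorProduct.tmul_add,
      ← TensorProduct.smul_tmul', TensorProduct.tmul_smul, smul_smul]
    module
  have hu' : (c^2) • ψ₀ + (c^2) • x + (c^2) • y + (c^2) • ψ₁ = c • ψ₀ + c • ψ₁ := by
    have := hG u hu_norm
    rw [hupand] at this
    simpa [map_add, map_smul, h0, h1, ← hx, ← hy, hu_def] using this
  have hv' : (c^2) • ψ₀ + (c^2 * Complex.I) • x + (c^2 * Complex.I) • y
      + (c^2 * Complex.I * Complex.I) • ψ₁ = c • ψ₀ + (c * Complex.I) • ψ₁ := by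
    have := hG v hv_norm
    rw [hvpand] at this
    simpa [map_add, map_smul, h0, h1, ← hx, ← hy, hv_def] using this
  -- combine: hv' - I • hu'
  have key : (c^2 - Complex.I * c^2 - c + Complex.I * c) • ψ₀
      + (c^2 * Complex.I * Complex.I - Complex.I * c^2) • ψ₁ = 0 := by
    linear_combination (norm := module) hv' - Complex.I • hu'
  have hsum : ∑ i : Fin 2, (![c^2 - Complex.I * c^2 - c + Complex.I * c,
      c^2 * Complex.I * Complex.I - Complex.I * c^2] i) • g i = 0 := by
    rw [Fin.sum_univ_two]
    simpa using key
  have hcoef := Fintype.linearIndependent_iff.mp hli _ hsum 1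
  simp only [Matrix.cons_val_one, Matrix.head_cons] at hcoef
  rw [hc2] at hcoef
  simp [Complex.ext_iff] at hcoef
end
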